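/- Let φ be a coloring of a regular tree such that its factor complexity b(n) (the number of equivalence classes of colored n-balls) is nondecreasing. If b(n+1) = b(n) for some n, then b(m+1) = b(m) for all m ≥ n; equivalently, the factor complexity of a coloring of a tree is either bounded or strictly increasing. -/

import Mathlib

open SimpleGraph

variable {V A : Type*}

/-- Equivalence of colored `n`-balls: a color-preserving isometry between the balls
of radius `n` centered at `u` and `v`, sending `u` to `v`. -/
def BallEquiv (G : SimpleGraph V) (φ : V → A) (n : ℕ) (u v : V) : Prop :=
  ∃ f : V → V, f u = v ∧
    (∀ x y : V, G.dist u x ≤ n → G.dist u y ≤ n → G.dist (f x) (f y) = G.dist x y) ∧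
    (∀ x : V, G.dist u x ≤ n → φ (f x) = φ x) ∧
    (∀ z : V, G.dist v z ≤ n → ∃ x : V, G.dist u x ≤ n ∧ f x = z)

/-- The factor complexity `b(n)`: the number of classes of colored `n`-balls. -/
noncomputable def complexity (G : SimpleGraph V) (φ : V → A) (n : ℕ) : ℕ :=
  Nat.card (Quot (BallEquiv G φ n))

/-- The colored `n`-ball at `u` is special: it admits two inequivalent `(n+1)`-extensions. -/
def IsSpecialCenter (G : SimpleGraph V) (φ : V → A) (n : ℕ) (u : V) : Prop :=
  ∃ v, BallEquiv G φ n u v ∧ ¬ BallEquiv G φ (n+1) u v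

/-- The type set `Λ_u` of a vertex. -/
def typeSet (G : SimpleGraph V) (φ : V → A) (u : V) : Set ℕ :=
  {n | IsSpecialCenter G φ n u}

/-- Two vertices are in the same class: their colored `n`-balls agree for all `n`. -/
def SameClass (G : SimpleGraph V) (φ : V → A) (u v : V) : Prop :=
  ∀ n, BallEquiv G φ n u v

/-- `m` is the maximal type of `u`. -/
def MaxType (G : SimpleGraph V) (φ : V → A) (u : V) (m : ℕ) : Prop :=
  m ∈ typeSet G φ u ∧ ∀ k ∈ typeSet G φ u, k ≤ m

/-- Weak adjacency of classes of colored `n`-balls (given by representatives `x`, `y`). -/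
def WeakAdj (G : SimpleGraph V) (φ : V → A) (n : ℕ) (x y : V) : Prop :=
  ∃ v w, G.Adj v w ∧ BallEquiv G φ n x v ∧ BallEquiv G φ n y w

/-- Strong adjacency: every ball of the class of `x` has a neighboring ball of the class of `y`. -/
def StrongAdj (G : SimpleGraph V) (φ : V → A) (n : ℕ) (x y : V) : Prop :=
  ∀ v, BallEquiv G φ n x v → ∃ w, G.Adj v w ∧ BallEquiv G φ n y w

/-- The factor graph `𝒢ₙ` on classes of colored `n`-balls. -/
def FactorGraph (G : SimpleGraph V) (φ : V → A) (n : ℕ) :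
    SimpleGraph (Quot (BallEquiv G φ n)) where
  Adj a b := a ≠ b ∧ ∃ u v, G.Adj u v ∧ Quot.mk _ u = a ∧ Quot.mk _ v = b
  symm := ⟨by rintro a b ⟨hne, u, v, h, hu, hv⟩; exact ⟨hne.symm, v, u, h.symm, hv, hu⟩⟩
  loopless := ⟨by rintro a ⟨hne, _⟩; exact hne rfl⟩

/-- The quotient graph `X = Γ\T` on classes of vertices. -/
def QuotGraph (G : SimpleGraph V) (φ : V → A) :
    SimpleGraph (Quot (SameClass G φ)) where
  Adj a b := a ≠ b ∧ ∃ u v, G.Adj u v ∧ Quot.mk _ u = a ∧ Quot.mk _ v = b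
  symm := ⟨by rintro a b ⟨hne, u, v, h, hu, hv⟩; exact ⟨hne.symm, v, u, h.symm, hv, hu⟩⟩
  loopless := ⟨by rintro a ⟨hne, _⟩; exact hne rfl⟩

/-!
All ball classes are finite in number, since `b` is monotone and `b(0) ≤ |A|` is positive. So if
`b(n+1) = b(n)`, restricting classes of `(n+1)`-balls to classes of `n`-balls is a bijection:
`n`-equivalent vertices are `(n+1)`-equivalent. On a tree this propagates to every radius. An
`(n+1)`-isometry `x ↦ y` matches the neighbours of `x` with `n`-equivalent neighbours of `y`, and
after a swap it can be made to match any prescribed `n`-equivalent pair of neighbours. By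
induction on `k`, each branch root `w` at `x` then has a `k`-isometry onto its partner sending `x`
to `y`; these glue to a `(k+1)`-isometry at `x`, because in a tree the distance between points of
different branches is the sum of their distances to the centre.
-/

structure IsBallIso (G : SimpleGraph V) (φ : V → A) (n : ℕ) (u v : V) (f : V → V) :
    Prop where
  map_center : f u = v
  dist_map : ∀ x y, G.dist u x ≤ n → G.dist u y ≤ n → G.dist (f x) (f y) = G.dist x y
  color_map : ∀ x, G.dist u x ≤ n → φ (f x) = φ x
  surj : ∀ z, G.dist v z ≤ n → ∃ x, G.dist u x ≤ n ∧ f x = z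

theorem ballEquiv_iff_exists_isBallIso {G : SimpleGraph V} {φ : V → A} {n : ℕ} {u v : V} :
    BallEquiv G φ n u v ↔ ∃ f, IsBallIso G φ n u v f :=
  ⟨fun ⟨f, h₁, h₂, h₃, h₄⟩ => ⟨f, h₁, h₂, h₃, h₄⟩,
    fun ⟨f, h₁, h₂, h₃, h₄⟩ => ⟨f, h₁, h₂, h₃, h₄⟩⟩

theorem isBallIso_id {G : SimpleGraph V} {φ : V → A} (n : ℕ) (u : V) :
    IsBallIso G φ n u u id :=
  ⟨rfl, fun _ _ _ _ => rfl, fun _ _ => rfl, fun z hz => ⟨z, hz, rfl⟩⟩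

namespace IsBallIso

variable {G : SimpleGraph V} {φ : V → A} {n : ℕ} {u v : V} {f : V → V}

theorem dist_center (h : IsBallIso G φ n u v f) {x : V} (hx : G.dist u x ≤ n) :
    G.dist v (f x) = G.dist u x := by
  simpa [h.map_center] using h.dist_map u x (by simp) hx

theorem injOn (hc : G.Connected) (h : IsBallIso G φ n u v f) :
    Set.InjOn f {x | G.dist u x ≤ n} := fun x hx y hy hxy => by
  have := h.dist_map x y hx hy
  rw [hxy, dist_self] at this
  exact hc.dist_eq_zero_iff.1 this.symm

theorem mono (h : IsBallIso G φ n u v f) {s : ℕ} (hs : s ≤ n) : IsBallIso G φ s u v f where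
  map_center := h.map_center
  dist_map x y hx hy := h.dist_map x y (hx.trans hs) (hy.trans hs)
  color_map x hx := h.color_map x (hx.trans hs)
  surj z hz := by
    obtain ⟨x, hx, rfl⟩ := h.surj z (hz.trans hs)
    exact ⟨x, h.dist_center hx ▸ hz, rfl⟩

theorem restrict (hc : G.Connected) (h : IsBallIso G φ n u v f) {w : V} {s : ℕ}
    (hw : G.dist u w + s ≤ n) : IsBallIso G φ s w (f w) f := by
  have hball : ∀ x, G.dist w x ≤ s → G.dist u x ≤ n := fun x hx => by
    have := hc.dist_triangle (u := u) (v := w) (w := x); omega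
  refine ⟨rfl, fun x y hx hy => h.dist_map x y (hball x hx) (hball y hy),
    fun x hx => h.color_map x (hball x hx), fun z hz => ?_⟩
  have hvz : G.dist v z ≤ n := by
    have := hc.dist_triangle (u := v) (v := f w) (w := z)
    have := h.dist_center (x := w) (by omega)
    omega
  obtain ⟨x, hx, rfl⟩ := h.surj z hvz
  exact ⟨x, by rw [← h.dist_map w x (by omega) hx]; exact hz, rfl⟩

theorem comp {w : V} {g : V → V} (hf : IsBallIso G φ n u v f) (hg : IsBallIso G φ n v w g) :
    IsBallIso G φ n u w (g ∘ f) where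
  map_center := by simp [hf.map_center, hg.map_center]
  dist_map x y hx hy := by
    simp only [Function.comp_apply]
    rw [hg.dist_map _ _ (hf.dist_center hx ▸ hx) (hf.dist_center hy ▸ hy),
      hf.dist_map x y hx hy]
  color_map x hx := by
    simp only [Function.comp_apply]
    rw [hg.color_map _ (hf.dist_center hx ▸ hx), hf.color_map x hx]
  surj z hz := by
    obtain ⟨y, hy, rfl⟩ := hg.surj z hz
    obtain ⟨x, hx, rfl⟩ := hf.surj y hy
    exact ⟨x, hx, rfl⟩

theorem exists_symm (hc : G.Connected) (h : IsBallIso G φ n u v f) :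
    ∃ g, IsBallIso G φ n v u g := by
  have : Nonempty V := ⟨u⟩
  set B := {x | G.dist u x ≤ n}
  have hinv : ∀ z, G.dist v z ≤ n →
      Function.invFunOn f B z ∈ B ∧ f (Function.invFunOn f B z) = z :=
    fun z hz => Function.invFunOn_pos (h.surj z hz)
  have hleft := (h.injOn hc).leftInvOn_invFunOn
  refine ⟨Function.invFunOn f B, ?_, fun x y hx hy => ?_, fun x hx => ?_, fun z hz => ?_⟩
  · rw [← h.map_center]
    exact hleft (show G.dist u u ≤ n by simp)
  · rw [← h.dist_map _ _ (hinv x hx).1 (hinv y hy).1, (hinv x hx).2, (hinv y hy).2]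
  · rw [← h.color_map _ (hinv x hx).1, (hinv x hx).2]
  · exact ⟨f z, h.dist_center hz ▸ hz, hleft hz⟩

theorem bijOn_neighborSet (hc : G.Connected) (h : IsBallIso G φ n u v f) (hn : 1 ≤ n) :
    Set.BijOn f (G.neighborSet u) (G.neighborSet v) := by
  have hadj : ∀ {a b}, G.Adj a b → G.dist a b ≤ n := fun hab => by
    rwa [dist_eq_one_iff_adj.2 hab]
  refine ⟨fun w hw => ?_, fun x hx y hy => h.injOn hc (hadj hx) (hadj hy), fun z hz => ?_⟩
  · rw [mem_neighborSet, ← dist_eq_one_iff_adj, h.dist_center (hadj hw), dist_eq_one_iff_adj]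
    exact hw
  · obtain ⟨x, hx, rfl⟩ := h.surj z (hadj hz)
    refine ⟨x, ?_, rfl⟩
    rw [mem_neighborSet, ← dist_eq_one_iff_adj, ← h.dist_center hx, dist_eq_one_iff_adj]
    exact hz

theorem ballEquiv_of_adj (hc : G.Connected) (h : IsBallIso G φ (n + 1) u v f) {w : V}
    (hw : G.Adj u w) : BallEquiv G φ n w (f w) :=
  ballEquiv_iff_exists_isBallIso.2 ⟨f, h.restrict hc (by rw [dist_eq_one_iff_adj.2 hw]; omega)⟩

end IsBallIso

theorem isBallIso_zero_iff {G : SimpleGraph V} {φ : V → A} {u v : V} {f : V → V}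
    (hc : G.Connected) : IsBallIso G φ 0 u v f ↔ f u = v ∧ φ v = φ u := by
  refine ⟨fun h => ⟨h.map_center, h.map_center ▸ h.color_map u (by simp)⟩,
    fun ⟨hu, hφ⟩ => ?_⟩
  have hball : ∀ {c x : V}, G.dist c x ≤ 0 → x = c := fun hx =>
    (hc.dist_eq_zero_iff.1 (Nat.le_zero.1 hx)).symm
  refine ⟨hu, fun x y hx hy => ?_, fun x hx => ?_,
    fun z hz => ⟨u, by simp, hu.trans (hball hz).symm⟩⟩
  · rw [hball hx, hball hy, dist_self, dist_self]
  · rw [hball hx, hu, hφ]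

section BallEquiv

variable {G : SimpleGraph V} {φ : V → A} {n : ℕ} {u v w : V}

theorem BallEquiv.mono (h : BallEquiv G φ n u v) {s : ℕ} (hs : s ≤ n) :
    BallEquiv G φ s u v := by
  obtain ⟨f, hf⟩ := ballEquiv_iff_exists_isBallIso.1 h
  exact ballEquiv_iff_exists_isBallIso.2 ⟨f, hf.mono hs⟩

theorem BallEquiv.symm (hc : G.Connected) (h : BallEquiv G φ n u v) : BallEquiv G φ n v u := by
  obtain ⟨f, hf⟩ := ballEquiv_iff_exists_isBallIso.1 h
  exact ballEquiv_iff_exists_isBallIso.2 (hf.exists_symm hc)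

theorem BallEquiv.trans (huv : BallEquiv G φ n u v) (hvw : BallEquiv G φ n v w) :
    BallEquiv G φ n u w := by
  obtain ⟨f, hf⟩ := ballEquiv_iff_exists_isBallIso.1 huv
  obtain ⟨g, hg⟩ := ballEquiv_iff_exists_isBallIso.1 hvw
  exact ballEquiv_iff_exists_isBallIso.2 ⟨g ∘ f, hf.comp hg⟩

theorem ballEquiv_equivalence (hc : G.Connected) (n : ℕ) : Equivalence (BallEquiv G φ n) :=
  ⟨fun u => ballEquiv_iff_exists_isBallIso.2 ⟨id, isBallIso_id n u⟩, BallEquiv.symm hc,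
    BallEquiv.trans⟩

theorem BallEquiv.color (h : BallEquiv G φ n u v) : φ v = φ u := by
  obtain ⟨f, hf⟩ := ballEquiv_iff_exists_isBallIso.1 h
  simpa [hf.map_center] using hf.color_map u (by simp)

theorem ballEquiv_zero_iff (hc : G.Connected) : BallEquiv G φ 0 u v ↔ φ v = φ u :=
  ⟨BallEquiv.color, fun hφ =>
    ballEquiv_iff_exists_isBallIso.2 ⟨fun _ => v, (isBallIso_zero_iff hc).2 ⟨rfl, hφ⟩⟩⟩

end BallEquiv

namespace SimpleGraph

variable {G : SimpleGraph V} {x z : V}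

theorem Connected.exists_adj_dist_add_one_eq (hc : G.Connected) (h : x ≠ z) :
    ∃ w, G.Adj x w ∧ G.dist w z + 1 = G.dist x z := by
  obtain ⟨p, -, hp⟩ := hc.exists_path_of_dist x z
  have hnil : ¬ p.Nil := Walk.not_nil_of_ne h
  have hadj := p.adj_snd hnil
  refine ⟨p.snd, hadj, le_antisymm ?_ ?_⟩
  · have := dist_le p.tail
    have := Walk.length_tail_add_one hnil
    omega
  · have := hc.dist_triangle (u := x) (v := p.snd) (w := z)
    rw [dist_eq_one_iff_adj.2 hadj] at this
    omega

open Classical in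
/-- The neighbour of `x` on a geodesic to `z`; junk value `x` when `x = z`. -/
noncomputable def stepToward (G : SimpleGraph V) (x z : V) : V :=
  if h : ∃ w, G.Adj x w ∧ G.dist w z + 1 = G.dist x z then h.choose else x

theorem Connected.stepToward_spec (hc : G.Connected) (h : x ≠ z) :
    G.Adj x (G.stepToward x z) ∧ G.dist (G.stepToward x z) z + 1 = G.dist x z := by
  have hex := hc.exists_adj_dist_add_one_eq h
  rw [stepToward, dif_pos hex]
  exact hex.choose_spec

theorem IsTree.eq_of_adj_of_dist_lt (htree : G.IsTree) {w w' : V} (hw : G.Adj x w)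
    (hw' : G.Adj x w') (h : G.dist w z < G.dist x z) (h' : G.dist w' z < G.dist x z) :
    w = w' := by
  classical
  have hc := htree.connected
  obtain ⟨p, hp, -⟩ := hc.exists_path_of_dist z x
  have penultimate : ∀ {w}, G.Adj x w → G.dist w z < G.dist x z → w = p.penultimate := by
    intro w hw h
    obtain ⟨q, hq, hql⟩ := hc.exists_path_of_dist z w
    have hx : x ∉ q.support := fun hx => by
      have := dist_le (q.takeUntil x hx)
      have := q.length_takeUntil_le_length hx
      rw [dist_comm (u := w), dist_comm (u := x)] at h
      omega
    exact htree.isAcyclic.eq_penultimate_of_adj_end hp hw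
      (htree.isAcyclic.mem_support_of_ne_mem_support_of_adj_of_isPath hp hq hw hx)
  rw [penultimate hw h, penultimate hw' h']

theorem IsTree.stepToward_eq (htree : G.IsTree) {w : V} (hw : G.Adj x w)
    (h : G.dist w z < G.dist x z) : G.stepToward x z = w := by
  have hxz : x ≠ z := by rintro rfl; simp at h
  have := htree.connected.stepToward_spec hxz
  exact htree.eq_of_adj_of_dist_lt this.1 hw (by omega) h

/-- `ha` and `hb` say that `a` lies on the side of `w` and `b` on the side of `x` of the
edge `xw`. -/
theorem IsTree.dist_eq_add_across_edge (htree : G.IsTree) {w a b : V} (hw : G.Adj x w)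
    (ha : G.dist w a < G.dist x a) (hb : G.dist x b < G.dist w b) :
    G.dist a b = G.dist x a + G.dist x b := by
  have hc := htree.connected
  obtain ⟨r, hr⟩ : ∃ r, G.dist x b = r := ⟨_, rfl⟩
  induction r generalizing b with
  | zero =>
    rw [← hc.dist_eq_zero_iff.1 hr, dist_self, add_zero, dist_comm]
  | succ r ih =>
    have hbx : b ≠ x := by rintro rfl; simp at hr
    obtain ⟨t, hbt, htx⟩ := hc.exists_adj_dist_add_one_eq hbx
    have := G.dist_comm (u := t) (v := x)
    have := G.dist_comm (u := b) (v := x)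
    have hxt : G.dist x t < G.dist w t := by
      have := hc.dist_triangle (u := w) (v := t) (w := b)
      rw [dist_eq_one_iff_adj.2 hbt.symm] at this
      omega
    have ih := ih hxt (by omega)
    rcases htree.dist_eq_dist_add_one_of_adj a hbt with hab | hat
    · omega
    -- otherwise `b` and a second neighbour `s` of `t` would both lie towards `a`
    exfalso
    obtain ⟨s, hts, hsa, hsb⟩ : ∃ s, G.Adj t s ∧ G.dist s a < G.dist t a ∧ s ≠ b := by
      by_cases htx' : t = x
      · subst htx'
        exact ⟨w, hw, ha, by rintro rfl; simp at hb⟩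
      · obtain ⟨s, hts, hsx⟩ := hc.exists_adj_dist_add_one_eq htx'
        refine ⟨s, hts, ?_, by rintro rfl; omega⟩
        have := hc.dist_triangle (u := s) (v := x) (w := a)
        have := G.dist_comm (u := t) (v := a)
        omega
    have := G.dist_comm (u := t) (v := a)
    have := G.dist_comm (u := b) (v := a)
    exact hsb (htree.eq_of_adj_of_dist_lt hts hbt.symm hsa (by omega))

theorem IsTree.dist_eq_add_across_branches (htree : G.IsTree) {w w' a b : V} (hw : G.Adj x w)
    (hw' : G.Adj x w') (hne : w ≠ w') (ha : G.dist w a < G.dist x a)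
    (hb : G.dist w' b < G.dist x b) : G.dist a b = G.dist x a + G.dist x b := by
  refine htree.dist_eq_add_across_edge hw ha ?_
  have := G.dist_comm (u := b) (v := w)
  have := G.dist_comm (u := b) (v := x)
  rcases htree.dist_eq_dist_add_one_of_adj b hw with h | h
  · exact absurd (htree.eq_of_adj_of_dist_lt hw hw' (by omega) hb) hne
  · omega

end SimpleGraph

section Gluing

variable {G : SimpleGraph V} {φ : V → A} {k : ℕ} {x y : V}

theorem IsBallIso.dist_map_of_branch (hc : G.Connected) {w w' : V} {g : V → V}
    (h : IsBallIso G φ k w w' g)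
    (hgx : g x = y) (hxw : G.Adj x w) (hyw' : G.Adj y w') {z : V} (hz : G.dist w z ≤ k)
    (hwz : G.dist w z + 1 = G.dist x z) : G.dist y (g z) = G.dist x z := by
  rcases eq_or_ne z w with rfl | hzw
  · rw [h.map_center, dist_eq_one_iff_adj.2 hyw', dist_eq_one_iff_adj.2 hxw]
  · have := hc.pos_dist_of_ne hzw.symm
    have := G.dist_comm (u := w) (v := x)
    rw [← hgx, h.dist_map x z (by rw [dist_eq_one_iff_adj.2 hxw.symm]; omega) hz]

theorem IsBallIso.exists_branch_preimage (htree : G.IsTree) {w w' : V} {g : V → V}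
    (h : IsBallIso G φ k w w' g)
    (hgx : g x = y) (hxw : G.Adj x w) {c : V} (hck : G.dist w' c ≤ k)
    (hwc : G.dist w' c + 1 = G.dist y c) :
    ∃ a, G.dist w a < G.dist x a ∧ G.dist x a ≤ k + 1 ∧ g a = c := by
  obtain ⟨a, ha, rfl⟩ := h.surj c hck
  have hdist := h.dist_center ha
  have := G.dist_comm (u := a) (v := x)
  have := G.dist_comm (u := a) (v := w)
  rcases htree.dist_eq_dist_add_one_of_adj a hxw with hax | haw
  · exact ⟨a, by omega, by omega, rfl⟩
  · have := G.dist_comm (u := w) (v := x)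
    have := h.dist_map x a (by rw [dist_eq_one_iff_adj.2 hxw.symm]; omega) ha
    rw [hgx] at this
    omega

open Classical in
noncomputable def glueBranches (G : SimpleGraph V) (x y : V) (g : V → V → V) (z : V) : V :=
  if z = x then y else g (G.stepToward x z) z

@[simp]
theorem glueBranches_self (g : V → V → V) : glueBranches G x y g x = y := if_pos rfl

theorem glueBranches_of_ne (g : V → V → V) {z : V} (hz : z ≠ x) :
    glueBranches G x y g z = g (G.stepToward x z) z := if_neg hz

theorem dist_glueBranches (htree : G.IsTree) {β : V → V} {g : V → V → V}
    (hβ : Set.MapsTo β (G.neighborSet x) (G.neighborSet y))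
    (hβinj : Set.InjOn β (G.neighborSet x))
    (hg : ∀ w ∈ G.neighborSet x, IsBallIso G φ k w (β w) (g w))
    (hgx : ∀ w ∈ G.neighborSet x, g w x = y) {a b : V} (ha : G.dist x a ≤ k + 1)
    (hb : G.dist x b ≤ k + 1) :
    G.dist (glueBranches G x y g a) (glueBranches G x y g b) = G.dist a b := by
  have hc := htree.connected
  have hdepth : ∀ {z}, z ≠ x → G.dist x z ≤ k + 1 →
      G.dist y (glueBranches G x y g z) = G.dist x z ∧
      G.dist (β (G.stepToward x z)) (glueBranches G x y g z) <
        G.dist y (glueBranches G x y g z) := by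
    intro z hz hzk
    obtain ⟨hw, hwz⟩ := hc.stepToward_spec (Ne.symm hz)
    have h₁ := (hg _ hw).dist_map_of_branch hc (hgx _ hw) hw (hβ hw) (by omega) hwz
    have h₂ := (hg _ hw).dist_center (x := z) (by omega)
    rw [glueBranches_of_ne g hz]
    omega
  have hcenter : ∀ z, G.dist x z ≤ k + 1 → G.dist y (glueBranches G x y g z) = G.dist x z :=
    fun z hz => by
      rcases eq_or_ne z x with rfl | hzx
      · rw [glueBranches_self, dist_self, dist_self]
      · exact (hdepth hzx hz).1
  rcases eq_or_ne a x with rfl | hax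
  · rw [glueBranches_self]; exact hcenter b hb
  rcases eq_or_ne b x with rfl | hbx
  · rw [glueBranches_self, dist_comm, hcenter a ha, dist_comm]
  obtain ⟨hwa, hda⟩ := hc.stepToward_spec (Ne.symm hax)
  obtain ⟨hwb, hdb⟩ := hc.stepToward_spec (Ne.symm hbx)
  by_cases hw : G.stepToward x a = G.stepToward x b
  · rw [glueBranches_of_ne g hax, glueBranches_of_ne g hbx, ← hw]
    exact (hg _ hwa).dist_map a b (by omega) (by rw [hw]; omega)
  · rw [htree.dist_eq_add_across_branches (hβ hwa) (hβ hwb) (hβinj.ne hwa hwb hw)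
        (hdepth hax ha).2 (hdepth hbx hb).2,
      htree.dist_eq_add_across_branches hwa hwb hw (a := a) (b := b) (by omega) (by omega),
      (hdepth hax ha).1, (hdepth hbx hb).1]

theorem exists_isBallIso_succ_of_branches (htree : G.IsTree) {β : V → V} (hφ : φ y = φ x)
    (hβ : Set.BijOn β (G.neighborSet x) (G.neighborSet y))
    (hg : ∀ w ∈ G.neighborSet x, ∃ g, IsBallIso G φ k w (β w) g ∧ g x = y) :
    ∃ F, IsBallIso G φ (k + 1) x y F ∧ Set.EqOn F β (G.neighborSet x) := by
  have hc := htree.connected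
  choose! g hg hgx using hg
  refine ⟨glueBranches G x y g, ⟨glueBranches_self g,
    fun a b ha hb => dist_glueBranches htree hβ.mapsTo hβ.injOn hg hgx ha hb,
    fun a ha => ?_, fun c hcy => ?_⟩, fun w hw => ?_⟩
  · rcases eq_or_ne a x with rfl | hax
    · rw [glueBranches_self, hφ]
    · obtain ⟨hwa, hda⟩ := hc.stepToward_spec (Ne.symm hax)
      rw [glueBranches_of_ne g hax]
      exact (hg _ hwa).color_map a (by omega)
  · rcases eq_or_ne c y with rfl | hc'
    · exact ⟨x, by simp, glueBranches_self g⟩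
    obtain ⟨w', hw', hwc⟩ := hc.exists_adj_dist_add_one_eq hc'.symm
    obtain ⟨w, hw, rfl⟩ := hβ.surjOn hw'
    obtain ⟨a, hwa, hak, rfl⟩ :=
      (hg w hw).exists_branch_preimage htree (hgx w hw) hw (by omega) hwc
    have hax : a ≠ x := by rintro rfl; simp at hwa
    exact ⟨a, hak, by rw [glueBranches_of_ne g hax, htree.stepToward_eq hw hwa]⟩
  · rw [glueBranches_of_ne g (G.ne_of_adj hw).symm,
      htree.stepToward_eq hw (by simp [dist_eq_one_iff_adj.2 hw]), (hg w hw).map_center]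

end Gluing

section Stabilization

variable {G : SimpleGraph V} {φ : V → A} {m : ℕ}

theorem IsBallIso.exists_bijOn_swap (hc : G.Connected) {x y x' y' : V} {f : V → V}
    (hf : IsBallIso G φ (m + 1) x y f) (hx' : G.Adj x x') (hy' : G.Adj y y')
    (h' : BallEquiv G φ m x' y') :
    ∃ β, Set.BijOn β (G.neighborSet x) (G.neighborSet y) ∧
      (∀ w ∈ G.neighborSet x, BallEquiv G φ m w (β w)) ∧ β x' = y' := by
  classical
  have hbij := hf.bijOn_neighborSet hc (by omega)
  refine ⟨Equiv.swap (f x') y' ∘ f, (Equiv.bijOn_swap (hbij.mapsTo hx') hy').comp hbij,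
    fun w hw => ?_, by simp⟩
  have hw' := hf.ballEquiv_of_adj hc hw
  simp only [Function.comp_apply, Equiv.swap_apply_def]
  split_ifs with h₁ h₂
  · rwa [hbij.injOn hw hx' h₁]
  · exact (h₂ ▸ hw').trans ((h'.symm hc).trans (hf.ballEquiv_of_adj hc hx'))
  · exact hw'

/-- Pinning a neighbour `x' ↦ y'` is what makes the induction run: the branch isometries glued
by `exists_isBallIso_succ_of_branches` must send the centre to the centre. -/
theorem exists_isBallIso_of_adj (htree : G.IsTree)
    (hstable : ∀ a b, BallEquiv G φ m a b → BallEquiv G φ (m + 1) a b) (k : ℕ)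
    {x y x' y' : V}
    (hxy : BallEquiv G φ m x y) (hx' : G.Adj x x') (hy' : G.Adj y y')
    (h' : BallEquiv G φ m x' y') : ∃ F, IsBallIso G φ k x y F ∧ F x' = y' := by
  have hc := htree.connected
  induction k generalizing x y x' y' with
  | zero =>
    classical
    refine ⟨Function.update (fun _ => y) x' y', (isBallIso_zero_iff hc).2 ⟨?_, hxy.color⟩,
      by simp⟩
    simp [hx'.ne]
  | succ k ih =>
    obtain ⟨f, hf⟩ := ballEquiv_iff_exists_isBallIso.1 (hstable x y hxy)
    obtain ⟨β, hβ, hβm, hβx'⟩ := hf.exists_bijOn_swap hc hx' hy' h'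
    obtain ⟨F, hF, hFβ⟩ := exists_isBallIso_succ_of_branches htree hxy.color hβ
      fun w hw => ih (hβm w hw) (G.adj_symm hw) (G.adj_symm (hβ.mapsTo hw)) hxy
    exact ⟨F, hF, (hFβ hx').trans hβx'⟩

theorem ballEquiv_of_stable (htree : G.IsTree)
    (hstable : ∀ a b, BallEquiv G φ m a b → BallEquiv G φ (m + 1) a b) {x y : V}
    (hxy : BallEquiv G φ m x y) (k : ℕ) : BallEquiv G φ k x y := by
  have hc := htree.connected
  cases k with
  | zero => exact hxy.mono (Nat.zero_le m)
  | succ k =>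
    obtain ⟨f, hf⟩ := ballEquiv_iff_exists_isBallIso.1 (hstable x y hxy)
    have hβ := hf.bijOn_neighborSet hc (by omega)
    obtain ⟨F, hF, -⟩ := exists_isBallIso_succ_of_branches htree hxy.color hβ fun w hw =>
      exists_isBallIso_of_adj htree hstable k (hf.ballEquiv_of_adj hc hw) (G.adj_symm hw)
        (G.adj_symm (hβ.mapsTo hw)) hxy
    exact ballEquiv_iff_exists_isBallIso.2 ⟨F, hF⟩

end Stabilization

section Complexity

variable {G : SimpleGraph V} {φ : V → A}

theorem complexity_zero_pos [Finite A] (hc : G.Connected) : 0 < complexity G φ 0 := by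
  have : Nonempty (Quot (BallEquiv G φ 0)) := ⟨Quot.mk _ hc.nonempty.some⟩
  have : Finite (Quot (BallEquiv G φ 0)) :=
    Finite.of_injective (Quot.lift φ fun _ _ h => h.color.symm) fun p q hpq => by
      induction p using Quot.ind
      induction q using Quot.ind
      exact Quot.sound ((ballEquiv_zero_iff hc).2 hpq.symm)
  exact Nat.card_pos

theorem complexity_succ_eq_iff (hc : G.Connected) (n : ℕ)
    [Finite (Quot (BallEquiv G φ (n + 1)))] :
    complexity G φ (n + 1) = complexity G φ n ↔
      ∀ x y, BallEquiv G φ n x y → BallEquiv G φ (n + 1) x y := by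
  let restrict : Quot (BallEquiv G φ (n + 1)) → Quot (BallEquiv G φ n) :=
    Quot.map id fun _ _ h => h.mono n.le_succ
  have hsurj : Function.Surjective restrict := Quot.ind fun x => ⟨Quot.mk _ x, rfl⟩
  have hinj : Function.Injective restrict ↔
      ∀ x y, BallEquiv G φ n x y → BallEquiv G φ (n + 1) x y := by
    refine ⟨fun h x y hxy => ?_, fun h => ?_⟩
    · exact ((ballEquiv_equivalence hc _).quot_mk_eq_iff x y).1
        (h (Quot.sound hxy : Quot.mk _ x = Quot.mk _ y))
    · rintro ⟨x⟩ ⟨y⟩ hxy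
      exact Quot.sound (h x y (((ballEquiv_equivalence hc n).quot_mk_eq_iff x y).1 hxy))
  rw [complexity, complexity, ← hinj]
  exact ⟨fun hcard => ((Nat.bijective_iff_surjective_and_card restrict).2 ⟨hsurj, hcard⟩).1,
    fun hi => Nat.card_eq_of_bijective restrict ⟨hi, hsurj⟩⟩

end Complexity

theorem complexity_bounded_or_strictMono {V A : Type*} (G : SimpleGraph V)
    (φ : V → A) [Finite A]
    (htree : G.IsTree)
    (hmono : Monotone (complexity G φ))
    (n : ℕ) (h : complexity G φ (n + 1) = complexity G φ n) :
    ∀ m, n ≤ m → complexity G φ (m + 1) = complexity G φ m := by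
  have hc := htree.connected
  have hfin : ∀ k, Finite (Quot (BallEquiv G φ k)) := fun k =>
    Nat.finite_of_card_ne_zero ((complexity_zero_pos hc).trans_le (hmono k.zero_le)).ne'
  have hstable := (complexity_succ_eq_iff hc n).1 h
  intro m hm
  exact (complexity_succ_eq_iff hc m).2 fun x y hxy =>
    ballEquiv_of_stable htree hstable (hxy.mono hm) (m + 1)
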